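/- arXiv:2601.06295 — 4 statements merged into one kernel-verified Lean document; each statement's English description precedes it below -/
import Mathlib

section
/- A Dyck word of length 2m+2 with exactly k valleys is uniquely determined by the pair of sequences (up_i, down_i) for i = 1, …, k, where up_i (resp. down_i) counts the central u's (resp. d's) occurring before the i-th valley. Moreover, the map sending a Dyck word to this pair of sequences is a bijection onto the set of pairs of weakly increasing sequences (a_1 ≤ … ≤ a_k) and (b_1 ≤ … ≤ b_k) of nonnegative integers satisfying a_i ≥ b_i for all i and a_k ≤ m-k. -/
open scoped BigOperators

/-- A Dyck word of length `2n`, encoded as a list of booleans where `true` is `u`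
and `false` is `d`: `n` u's, `n` d's, and every prefix has at least as many u's as d's. -/
def IsDyckWord (n : ℕ) (w : List Bool) : Prop :=
  w.length = 2 * n ∧ w.count true = n ∧
    ∀ t : ℕ, (w.take t).count false ≤ (w.take t).count true

/-- Position `i` of `w` is the start (the `d`) of a valley `du`. -/
def isValleyStart (w : List Bool) (i : ℕ) : Bool :=
  !(w.getD i true) && w.getD (i + 1) false

/-- The positions of the valleys of `w`, in increasing order. -/
def valleyPositions (w : List Bool) : List ℕ :=
  (List.range w.length).filter (isValleyStart w)

/-- The number of valleys (occurrences of `du`) in `w`. -/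
def numValleys (w : List Bool) : ℕ :=
  (valleyPositions w).length

/-- The letter at position `t` of `w` is central: not first, not last, not part of a valley. -/
def isCentral (w : List Bool) (t : ℕ) : Bool :=
  decide (0 < t) && decide (t + 1 < w.length) &&
    !(isValleyStart w t) && !(isValleyStart w (t - 1))

/-- `upCount w i` counts the central u's occurring before the `i`-th valley of `w`
(all central u's if `i` exceeds the number of valleys). -/
def upCount (w : List Bool) (i : ℕ) : ℕ :=
  ((List.range ((valleyPositions w).getD (i - 1) w.length)).filter
    (fun t => isCentral w t && w.getD t false)).length

/-- `downCount w i` counts the central d's occurring before the `i`-th valley of `w`. -/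
def downCount (w : List Bool) (i : ℕ) : ℕ :=
  ((List.range ((valleyPositions w).getD (i - 1) w.length)).filter
    (fun t => isCentral w t && !(w.getD t true))).length

/-- The width of the matrix `M` is at most `c`: along every weak diagonal
(a set of positions with nonzero entries that is a chain in the componentwise order),
the entries sum to at most `c`. -/
def widthLE {a b : ℕ} (M : Fin a → Fin b → ℕ) (c : ℕ) : Prop :=
  ∀ D : Finset (Fin a × Fin b),
    (∀ p ∈ D, M p.1 p.2 ≠ 0) →
    (∀ p ∈ D, ∀ q ∈ D, (p.1 ≤ q.1 ∧ p.2 ≤ q.2) ∨ (q.1 ≤ p.1 ∧ q.2 ≤ p.2)) →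
    (∑ p ∈ D, M p.1 p.2) ≤ c

/-- An `a × b × c` plane partition: entries bounded by `c`, weakly decreasing
along rows and columns. -/
def IsPlanePartition {a b : ℕ} (M : Fin a → Fin b → ℕ) (c : ℕ) : Prop :=
  (∀ i j, M i j ≤ c) ∧
  (∀ i, ∀ j j' : Fin b, j ≤ j' → M i j' ≤ M i j) ∧
  (∀ j, ∀ i i' : Fin a, i ≤ i' → M i' j ≤ M i j)

namespace Dyck11

def bw : List (ℕ × ℕ) → List Bool
  | [] => []
  | (a, b) :: L => (List.replicate a true ++ List.replicate b false) ++ bw L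

def pos (L : List (ℕ × ℕ)) : Prop := ∀ p ∈ L, 1 ≤ p.1 ∧ 1 ≤ p.2

def As (L : List (ℕ × ℕ)) (i : ℕ) : ℕ := ((L.take i).map Prod.fst).sum
def Bs (L : List (ℕ × ℕ)) (i : ℕ) : ℕ := ((L.take i).map Prod.snd).sum

@[simp] lemma As_nil (i : ℕ) : As [] i = 0 := by simp [As]
@[simp] lemma Bs_nil (i : ℕ) : Bs [] i = 0 := by simp [Bs]
@[simp] lemma As_zero (L : List (ℕ × ℕ)) : As L 0 = 0 := by simp [As]
@[simp] lemma Bs_zero (L : List (ℕ × ℕ)) : Bs L 0 = 0 := by simp [Bs]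
@[simp] lemma As_cons (a b : ℕ) (L : List (ℕ × ℕ)) (i : ℕ) :
    As ((a, b) :: L) (i + 1) = a + As L i := by simp [As]
@[simp] lemma Bs_cons (a b : ℕ) (L : List (ℕ × ℕ)) (i : ℕ) :
    Bs ((a, b) :: L) (i + 1) = b + Bs L i := by simp [Bs]

lemma getD_replicate' (n : ℕ) (x d : Bool) (i : ℕ) :
    (List.replicate n x).getD i d = if i < n then x else d := by
  split
  · rw [List.getD_eq_getElem _ _ (by simpa)]
    simp
  · exact List.getD_eq_default _ _ (by simpa using by omega)

lemma getD_z (a b : ℕ) (w : List Bool) (t : ℕ) (x : Bool) :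
    ((List.replicate a true ++ List.replicate b false) ++ w).getD t x =
      if t < a then true else if t < a + b then false else w.getD (t - (a + b)) x := by
  rw [List.append_assoc]
  rcases lt_or_ge t a with h | h
  · rw [List.getD_append _ _ _ _ (by simpa), getD_replicate' , if_pos h, if_pos h]
  · rw [List.getD_append_right _ _ _ _ (by simpa), List.length_replicate, if_neg (by omega)]
    rcases lt_or_ge t (a + b) with h2 | h2
    · rw [List.getD_append _ _ _ _ (by simp; omega), getD_replicate', if_pos (by omega),
        if_pos h2]
    · rw [List.getD_append_right _ _ _ _ (by simp; omega), List.length_replicate,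
        if_neg (by omega)]
      congr 1
      omega

lemma valleyStart_z (a b : ℕ) (ha : 1 ≤ a) (hb : 1 ≤ b) (w : List Bool)
    (hs : w.getD 0 false = !w.isEmpty) (t : ℕ) :
    isValleyStart ((List.replicate a true ++ List.replicate b false) ++ w) t =
      if t + 1 < a + b then false
      else if t + 1 = a + b then !w.isEmpty
      else isValleyStart w (t - (a + b)) := by
  simp only [isValleyStart, getD_z]
  rcases lt_or_ge (t+1) (a+b) with h | h
  · rcases lt_or_ge t a with h1 | h1
    · simp only [if_pos h1, if_pos h]
      rcases lt_or_ge (t+1) a with h3 | h3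
      · simp only [if_pos h3]; simp
      · simp only [if_neg (by omega : ¬ t + 1 < a), if_pos h]; simp
    · simp only [if_neg (by omega : ¬ t < a), if_pos (show t < a + b by omega),
        if_neg (by omega : ¬ t + 1 < a), if_pos h]
      simp
  · rcases eq_or_lt_of_le h with h1 | h1
    · simp only [if_neg (by omega : ¬ t < a), if_pos (show t < a + b by omega),
        if_neg (by omega : ¬ t + 1 < a), if_neg (by omega : ¬ t + 1 < a + b),
        if_pos h1.symm]
      rw [show t + 1 - (a + b) = 0 from by omega, hs]
      simp
    · simp only [if_neg (by omega : ¬ t < a), if_neg (show ¬ t < a + b by omega),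
        if_neg (by omega : ¬ t + 1 < a), if_neg (by omega : ¬ t + 1 < a + b),
        if_neg (by omega : ¬ t + 1 = a + b)]
      rw [show t + 1 - (a + b) = (t - (a + b)) + 1 from by omega]

lemma length_z (a b : ℕ) (w : List Bool) :
    ((List.replicate a true ++ List.replicate b false) ++ w).length = a + b + w.length := by
  simp; omega

lemma valleyPositions_z (a b : ℕ) (ha : 1 ≤ a) (hb : 1 ≤ b) (w : List Bool)
    (hs : w.getD 0 false = !w.isEmpty) :
    valleyPositions ((List.replicate a true ++ List.replicate b false) ++ w) =
      (if w.isEmpty then [] else [a + b - 1]) ++ (valleyPositions w).map ((a + b) + ·) := by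
  rw [valleyPositions, length_z, List.range_add, List.filter_append]
  congr 1
  · have hab : a + b = (a + b - 1) + 1 := by omega
    rw [hab, List.range_succ, List.filter_append, List.filter_eq_nil_iff.2 ?side]
    case side =>
      intro t ht
      rw [List.mem_range] at ht
      rw [valleyStart_z a b ha hb w hs, if_pos (by omega)]
      simp
    rw [List.nil_append, List.filter_singleton, valleyStart_z a b ha hb w hs,
      if_neg (by omega), if_pos (by omega)]
    rcases Bool.eq_false_or_eq_true w.isEmpty with h | h <;> simp [h]
  · rw [List.filter_map]
    rw [List.filter_congr (fun t _ => ?_)]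
    · rw [valleyPositions]
    · show isValleyStart _ ((a+b) + t) = isValleyStart w t
      rw [valleyStart_z a b ha hb w hs, if_neg (by omega), if_neg (by omega)]
      congr 1
      omega

def Fu (w : List Bool) (t : ℕ) : Bool := isCentral w t && w.getD t false
def Gd (w : List Bool) (t : ℕ) : Bool := isCentral w t && !(w.getD t true)

lemma upCount_eq (w : List Bool) (i : ℕ) :
    upCount w i = ((List.range ((valleyPositions w).getD (i - 1) w.length)).filter
      (Fu w)).length := rfl

lemma downCount_eq (w : List Bool) (i : ℕ) :
    downCount w i = ((List.range ((valleyPositions w).getD (i - 1) w.length)).filter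
      (Gd w)).length := rfl

lemma Fu_z_low (a b : ℕ) (ha : 1 ≤ a) (hb : 1 ≤ b) (w : List Bool)
    (hs : w.getD 0 false = !w.isEmpty) (t : ℕ) (ht : t < a + b) :
    Fu ((List.replicate a true ++ List.replicate b false) ++ w) t
      = (decide (1 ≤ t) && decide (t < a)) := by
  simp only [Fu, isCentral, getD_z, valleyStart_z a b ha hb w hs, length_z]
  by_cases h1 : t < a
  · by_cases h2 : 1 ≤ t
    · simp only [if_pos h1, if_pos (show t + 1 < a + b by omega),
        if_pos (show t - 1 + 1 < a + b by omega)]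
      simp [h1, h2, show 0 < t by omega, show t + 1 < a + b + w.length by omega]
    · simp [show t = 0 by omega]
  · simp only [if_neg h1, if_pos ht]
    simp [h1]

lemma Gd_z_low (a b : ℕ) (ha : 1 ≤ a) (hb : 1 ≤ b) (w : List Bool)
    (hs : w.getD 0 false = !w.isEmpty) (t : ℕ) (ht : t < a + b) :
    Gd ((List.replicate a true ++ List.replicate b false) ++ w) t
      = (decide (a ≤ t) && decide (t < a + b - 1)) := by
  simp only [Gd, isCentral, getD_z, valleyStart_z a b ha hb w hs, length_z]
  by_cases h1 : t < a
  · simp only [if_pos h1]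
    simp [show ¬ a ≤ t by omega]
  · by_cases h2 : t + 1 < a + b
    · simp only [if_neg h1, if_pos ht, if_pos h2,
        if_pos (show t - 1 + 1 < a + b by omega)]
      simp [show a ≤ t by omega, show 0 < t by omega, show t < a + b - 1 by omega,
        show t + 1 < a + b + w.length by omega]
    · have heq : t + 1 = a + b := by omega
      simp only [if_neg h1, if_pos ht, if_neg h2, if_pos heq]
      rcases Bool.eq_false_or_eq_true w.isEmpty with h3 | h3
      · have hlen : w.length = 0 := by
          rw [List.isEmpty_iff] at h3; simp [h3]
        simp [h3, show ¬ t + 1 < a + b + w.length by omega,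
          show ¬ t < a + b - 1 by omega]
      · simp [h3, show ¬ t < a + b - 1 by omega]

lemma central_z_shift (a b : ℕ) (ha : 1 ≤ a) (hb : 1 ≤ b) (w : List Bool)
    (hs : w.getD 0 false = !w.isEmpty) (t : ℕ) :
    isCentral ((List.replicate a true ++ List.replicate b false) ++ w) ((a + b) + t)
      = isCentral w t := by
  simp only [isCentral, valleyStart_z a b ha hb w hs, length_z]
  rcases Nat.eq_zero_or_pos t with rfl | hpos
  · simp only [if_neg (show ¬ (a + b + 0 + 1 < a + b) by omega),
      if_neg (show ¬ (a + b + 0 + 1 = a + b) by omega),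
      if_neg (show ¬ (a + b + 0 - 1 + 1 < a + b) by omega),
      if_pos (show a + b + 0 - 1 + 1 = a + b by omega)]
    rcases Bool.eq_false_or_eq_true w.isEmpty with h3 | h3
    · have hlen : w.length = 0 := by
        rw [List.isEmpty_iff] at h3; simp [h3]
      simp [h3, hlen, isCentral]
    · simp [h3, isCentral]
  · simp only [if_neg (show ¬ (a + b + t + 1 < a + b) by omega),
      if_neg (show ¬ (a + b + t + 1 = a + b) by omega),
      if_neg (show ¬ (a + b + t - 1 + 1 < a + b) by omega),
      if_neg (show ¬ (a + b + t - 1 + 1 = a + b) by omega),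
      show a + b + t - (a + b) = t by omega,
      show a + b + t - 1 - (a + b) = t - 1 by omega]
    have h4 : (a + b + t + 1 < a + b + w.length) ↔ (t + 1 < w.length) := by omega
    have h5 : (0 < a + b + t) ↔ (0 < t) := by omega
    simp [h4, h5]

lemma Fu_z_shift (a b : ℕ) (ha : 1 ≤ a) (hb : 1 ≤ b) (w : List Bool)
    (hs : w.getD 0 false = !w.isEmpty) (t : ℕ) :
    Fu ((List.replicate a true ++ List.replicate b false) ++ w) ((a + b) + t) = Fu w t := by
  simp only [Fu, central_z_shift a b ha hb w hs, getD_z,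
    if_neg (show ¬ a + b + t < a by omega), if_neg (show ¬ a + b + t < a + b by omega),
    show a + b + t - (a + b) = t by omega]

lemma Gd_z_shift (a b : ℕ) (ha : 1 ≤ a) (hb : 1 ≤ b) (w : List Bool)
    (hs : w.getD 0 false = !w.isEmpty) (t : ℕ) :
    Gd ((List.replicate a true ++ List.replicate b false) ++ w) ((a + b) + t) = Gd w t := by
  simp only [Gd, central_z_shift a b ha hb w hs, getD_z,
    if_neg (show ¬ a + b + t < a by omega), if_neg (show ¬ a + b + t < a + b by omega),
    show a + b + t - (a + b) = t by omega]

lemma len_filter_band (c d n : ℕ) :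
    ((List.range n).filter (fun t => decide (c ≤ t) && decide (t < d))).length
      = min n d - min n c := by
  induction n with
  | zero => simp
  | succ n ih =>
    rw [List.range_succ, List.filter_append, List.length_append, ih, List.filter_singleton]
    by_cases h1 : c ≤ n <;> by_cases h2 : n < d <;> simp [h1, h2] <;> omega

lemma count_Fu_z (a b : ℕ) (ha : 1 ≤ a) (hb : 1 ≤ b) (w : List Bool)
    (hs : w.getD 0 false = !w.isEmpty) (n : ℕ) (h1 : a ≤ n) (h2 : n ≤ a + b) :
    ((List.range n).filter
      (Fu ((List.replicate a true ++ List.replicate b false) ++ w))).length = a - 1 := by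
  rw [List.filter_congr (fun t ht => Fu_z_low a b ha hb w hs t
    (lt_of_lt_of_le (List.mem_range.1 ht) h2)), len_filter_band]
  omega

lemma count_Gd_z (a b : ℕ) (ha : 1 ≤ a) (hb : 1 ≤ b) (w : List Bool)
    (hs : w.getD 0 false = !w.isEmpty) (n : ℕ) (h1 : a + b - 1 ≤ n) (h2 : n ≤ a + b) :
    ((List.range n).filter
      (Gd ((List.replicate a true ++ List.replicate b false) ++ w))).length = b - 1 := by
  rw [List.filter_congr (fun t ht => Gd_z_low a b ha hb w hs t
    (lt_of_lt_of_le (List.mem_range.1 ht) h2)), len_filter_band]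
  omega

lemma count_Fu_z_shift (a b : ℕ) (ha : 1 ≤ a) (hb : 1 ≤ b) (w : List Bool)
    (hs : w.getD 0 false = !w.isEmpty) (v : ℕ) :
    ((List.range ((a + b) + v)).filter
      (Fu ((List.replicate a true ++ List.replicate b false) ++ w))).length
      = (a - 1) + ((List.range v).filter (Fu w)).length := by
  rw [List.range_add, List.filter_append, List.length_append,
    count_Fu_z a b ha hb w hs (a + b) (by omega) (le_refl _), List.filter_map,
    List.length_map]
  congr 2
  exact List.filter_congr (fun t _ => Fu_z_shift a b ha hb w hs t)

lemma count_Gd_z_shift (a b : ℕ) (ha : 1 ≤ a) (hb : 1 ≤ b) (w : List Bool)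
    (hs : w.getD 0 false = !w.isEmpty) (v : ℕ) :
    ((List.range ((a + b) + v)).filter
      (Gd ((List.replicate a true ++ List.replicate b false) ++ w))).length
      = (b - 1) + ((List.range v).filter (Gd w)).length := by
  rw [List.range_add, List.filter_append, List.length_append,
    count_Gd_z a b ha hb w hs (a + b) (by omega) (le_refl _), List.filter_map,
    List.length_map]
  congr 2
  exact List.filter_congr (fun t _ => Gd_z_shift a b ha hb w hs t)

lemma As_ge (L : List (ℕ × ℕ)) (i : ℕ) (h : L.length ≤ i) : As L i = As L L.length := by
  simp [As, List.take_of_length_le h, List.take_length]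

lemma Bs_ge (L : List (ℕ × ℕ)) (i : ℕ) (h : L.length ≤ i) : Bs L i = Bs L L.length := by
  simp [Bs, List.take_of_length_le h, List.take_length]

lemma As_succ_of_lt (L : List (ℕ × ℕ)) (i : ℕ) (h : i < L.length) :
    As L (i + 1) = As L i + (L.get ⟨i, h⟩).1 := by
  unfold As
  rw [List.map_take, List.map_take, List.sum_take_succ _ i (by simpa using h)]
  simp

lemma Bs_succ_of_lt (L : List (ℕ × ℕ)) (i : ℕ) (h : i < L.length) :
    Bs L (i + 1) = Bs L i + (L.get ⟨i, h⟩).2 := by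
  unfold Bs
  rw [List.map_take, List.map_take, List.sum_take_succ _ i (by simpa using h)]
  simp

lemma As_gap (L : List (ℕ × ℕ)) (h : pos L) :
    ∀ j i, i ≤ j → j ≤ L.length → As L i + (j - i) ≤ As L j := by
  intro j
  induction j with
  | zero => intro i h1 _; interval_cases i; simp
  | succ j ih =>
    intro i h1 h2
    rcases Nat.eq_or_lt_of_le h1 with rfl | h3
    · simp
    · have hj : j < L.length := by omega
      have := ih i (by omega) (by omega)
      have hpos := (h _ (List.get_mem L ⟨j, hj⟩)).1
      rw [As_succ_of_lt L j hj]
      omega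

lemma Bs_gap (L : List (ℕ × ℕ)) (h : pos L) :
    ∀ j i, i ≤ j → j ≤ L.length → Bs L i + (j - i) ≤ Bs L j := by
  intro j
  induction j with
  | zero => intro i h1 _; interval_cases i; simp
  | succ j ih =>
    intro i h1 h2
    rcases Nat.eq_or_lt_of_le h1 with rfl | h3
    · simp
    · have hj : j < L.length := by omega
      have := ih i (by omega) (by omega)
      have hpos := (h _ (List.get_mem L ⟨j, hj⟩)).2
      rw [Bs_succ_of_lt L j hj]
      omega

lemma As_pos (L : List (ℕ × ℕ)) (h : pos L) (i : ℕ) (hi : i ≤ L.length) :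
    i ≤ As L i := by
  have := As_gap L h i 0 (by omega) hi
  simpa using this

lemma Bs_pos (L : List (ℕ × ℕ)) (h : pos L) (i : ℕ) (hi : i ≤ L.length) :
    i ≤ Bs L i := by
  have := Bs_gap L h i 0 (by omega) hi
  simpa using this

lemma bw_length (L : List (ℕ × ℕ)) : (bw L).length = As L L.length + Bs L L.length := by
  induction L with
  | nil => simp [bw]
  | cons p M ih =>
    obtain ⟨a, b⟩ := p
    rw [bw, length_z, ih]
    simp only [List.length_cons, As_cons, Bs_cons]
    omega

lemma bw_count_true (L : List (ℕ × ℕ)) : (bw L).count true = As L L.length := by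
  induction L with
  | nil => simp [bw]
  | cons p M ih =>
    obtain ⟨a, b⟩ := p
    rw [bw]
    simp [List.count_append, List.count_replicate, ih]

lemma bw_count_false (L : List (ℕ × ℕ)) : (bw L).count false = Bs L L.length := by
  induction L with
  | nil => simp [bw]
  | cons p M ih =>
    obtain ⟨a, b⟩ := p
    rw [bw]
    simp [List.count_append, List.count_replicate, ih]

lemma bw_getD0 (L : List (ℕ × ℕ)) (h : pos L) :
    (bw L).getD 0 false = !(bw L).isEmpty := by
  induction L with
  | nil => simp [bw]
  | cons p M ih =>
    obtain ⟨a, b⟩ := p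
    have ha := (h _ (List.mem_cons_self)).1
    have hb := (h _ (List.mem_cons_self)).2
    rw [bw, getD_z, if_pos (by omega)]
    have hne : (List.replicate a true ++ List.replicate b false) ++ bw M ≠ [] := by
      intro hc
      have := congrArg List.length hc
      rw [length_z] at this
      simp at this
      omega
    rcases hE : ((List.replicate a true ++ List.replicate b false) ++ bw M).isEmpty
      with _ | _
    · simp
    · exact absurd (List.isEmpty_iff.1 hE) hne

lemma bw_isEmpty_eq (L : List (ℕ × ℕ)) (h : pos L) : (bw L).isEmpty = L.isEmpty := by
  induction L with
  | nil => simp [bw]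
  | cons p M ih =>
    obtain ⟨a, b⟩ := p
    have ha := (h _ (List.mem_cons_self)).1
    have hne : (bw ((a, b) :: M)) ≠ [] := by
      intro hc
      have := congrArg List.length hc
      rw [bw, length_z] at this
      simp at this
      omega
    rcases hE : (bw ((a, b) :: M)).isEmpty with _ | _
    · simp
    · exact absurd (List.isEmpty_iff.1 hE) hne

lemma bw_valleys (L : List (ℕ × ℕ)) (h : pos L) :
    valleyPositions (bw L) = (List.range (L.length - 1)).map
      (fun i => As L (i + 1) + Bs L (i + 1) - 1) := by
  induction L with
  | nil => simp [bw, valleyPositions]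
  | cons p M ih =>
    obtain ⟨a, b⟩ := p
    have ha := (h _ (List.mem_cons_self)).1
    have hb := (h _ (List.mem_cons_self)).2
    have hM : pos M := fun q hq => h q (List.mem_cons_of_mem _ hq)
    rw [bw, valleyPositions_z a b ha hb (bw M) (bw_getD0 M hM), ih hM, bw_isEmpty_eq M hM]
    by_cases hMe : M = []
    · subst hMe
      simp
    · obtain ⟨n, hn⟩ : ∃ n, M.length = n + 1 :=
        ⟨M.length - 1, by have := List.length_pos_iff.2 hMe; omega⟩
      rw [List.length_cons, hn]
      simp only [Nat.add_sub_cancel, List.isEmpty_iff, if_neg hMe, List.map_map,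
        List.range_succ_eq_map, List.map_cons, List.map_map]
      congr 1
      · simp
        intro i hi
        have h1 := As_pos M hM (i + 1) (by omega)
        have h2 := Bs_pos M hM (i + 1) (by omega)
        omega

lemma bw_numValleys (L : List (ℕ × ℕ)) (h : pos L) : numValleys (bw L) = L.length - 1 := by
  rw [numValleys, bw_valleys L h]
  simp

lemma bw_counts (L : List (ℕ × ℕ)) (h : pos L) : ∀ i, 1 ≤ i → i ≤ L.length - 1 →
    upCount (bw L) i = As L i - i ∧ downCount (bw L) i = Bs L i - i := by
  induction L with
  | nil => intro i h1 h2; simp at h2; omega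
  | cons p M ih =>
    obtain ⟨a, b⟩ := p
    have ha := (h _ (List.mem_cons_self)).1
    have hb := (h _ (List.mem_cons_self)).2
    have hM : pos M := fun q hq => h q (List.mem_cons_of_mem _ hq)
    intro i h1 h2
    simp only [List.length_cons, Nat.add_sub_cancel] at h2
    have hMne : M ≠ [] := by intro hc; subst hc; simp at h2; omega
    have hgd := bw_getD0 M hM
    have hvp : valleyPositions (bw ((a, b) :: M))
        = (a + b - 1) :: (valleyPositions (bw M)).map ((a + b) + ·) := by
      rw [bw, valleyPositions_z a b ha hb (bw M) hgd, bw_isEmpty_eq M hM]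
      rcases M with _ | _
      · exact absurd rfl hMne
      · simp
    have hvplen : (valleyPositions (bw M)).length = M.length - 1 := by
      rw [bw_valleys M hM]
      simp
    rcases Nat.eq_or_lt_of_le h1 with hi1 | hgt
    · subst hi1
      constructor
      · rw [upCount_eq, hvp, show (1 : ℕ) - 1 = 0 from rfl, List.getD_cons_zero, bw,
          count_Fu_z a b ha hb (bw M) hgd (a + b - 1) (by omega) (by omega)]
        simp
      · rw [downCount_eq, hvp, show (1 : ℕ) - 1 = 0 from rfl, List.getD_cons_zero, bw,
          count_Gd_z a b ha hb (bw M) hgd (a + b - 1) (by omega) (by omega)]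
        simp
    · obtain ⟨l, rfl⟩ : ∃ l, i = l + 2 := ⟨i - 2, by omega⟩
      have hl : l < ((valleyPositions (bw M)).map ((a + b) + ·)).length := by
        rw [List.length_map, hvplen]; omega
      have hl2 : l < (valleyPositions (bw M)).length := by
        rw [List.length_map] at hl; exact hl
      have hAp := As_pos M hM (l + 1) (by omega)
      have hBp := Bs_pos M hM (l + 1) (by omega)
      have hih := ih hM (l + 1) (by omega) (by omega)
      constructor
      · rw [upCount_eq, hvp, show l + 2 - 1 = l + 1 from rfl, List.getD_cons_succ,
          List.getD_eq_getElem _ _ hl, List.getElem_map, bw,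
          count_Fu_z_shift a b ha hb (bw M) hgd]
        have hup := hih.1
        rw [upCount_eq, show l + 1 - 1 = l from rfl, List.getD_eq_getElem _ _ hl2] at hup
        rw [hup]
        simp only [As_cons]
        omega
      · rw [downCount_eq, hvp, show l + 2 - 1 = l + 1 from rfl, List.getD_cons_succ,
          List.getD_eq_getElem _ _ hl, List.getElem_map, bw,
          count_Gd_z_shift a b ha hb (bw M) hgd]
        have hdn := hih.2
        rw [downCount_eq, show l + 1 - 1 = l from rfl, List.getD_eq_getElem _ _ hl2] at hdn
        rw [hdn]
        simp only [Bs_cons]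
        omega

lemma take_count_true_z (a b : ℕ) (w : List Bool) (t : ℕ) :
    (((List.replicate a true ++ List.replicate b false) ++ w).take t).count true
      = min t a + ((w.take (t - (a + b))).count true) := by
  rw [List.append_assoc, List.take_append, List.take_append,
    List.count_append, List.count_append, List.take_replicate, List.take_replicate,
    List.length_replicate, List.length_replicate]
  simp [List.count_replicate, Nat.sub_sub]

lemma take_count_false_z (a b : ℕ) (w : List Bool) (t : ℕ) :
    (((List.replicate a true ++ List.replicate b false) ++ w).take t).count false
      = min (t - a) b + ((w.take (t - (a + b))).count false) := by
  rw [List.append_assoc, List.take_append, List.take_append,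
    List.count_append, List.count_append, List.take_replicate, List.take_replicate,
    List.length_replicate, List.length_replicate]
  simp [List.count_replicate, Nat.sub_sub]

lemma bw_take_boundary (L : List (ℕ × ℕ)) : ∀ i,
    (((bw L).take (As L i + Bs L i)).count true = As L i) ∧
    (((bw L).take (As L i + Bs L i)).count false = Bs L i) := by
  induction L with
  | nil => intro i; simp [bw]
  | cons p M ih =>
    obtain ⟨a, b⟩ := p
    intro i
    rcases i with _ | j
    · simp
    · have h0 := ih j
      constructor
      · rw [bw, take_count_true_z]
        simp only [As_cons, Bs_cons]
        rw [show min (a + As M j + (b + Bs M j)) a = a from by omega,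
          show a + As M j + (b + Bs M j) - (a + b) = As M j + Bs M j from by omega, h0.1]
      · rw [bw, take_count_false_z]
        simp only [As_cons, Bs_cons]
        rw [show a + As M j + (b + Bs M j) - a = As M j + (b + Bs M j) from by omega,
          show min (As M j + (b + Bs M j)) b = b from by omega,
          show a + As M j + (b + Bs M j) - (a + b) = As M j + Bs M j from by omega, h0.2]

lemma bw_pref (L : List (ℕ × ℕ)) (h : pos L) : ∀ c : ℕ, (∀ i, Bs L i ≤ c + As L i) →
    ∀ t, ((bw L).take t).count false ≤ c + ((bw L).take t).count true := by
  induction L with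
  | nil => intro c hc t; simp [bw]
  | cons p M ih =>
    obtain ⟨a, b⟩ := p
    intro c hc t
    have hM : pos M := fun q hq => h q (List.mem_cons_of_mem _ hq)
    have hb_le : b ≤ c + a := by have := hc 1; simpa using this
    by_cases ht : t < a + b
    · rw [bw, take_count_true_z, take_count_false_z, show t - (a + b) = 0 from by omega,
        List.take_zero, List.count_nil, List.count_nil]
      omega
    · have hcM : ∀ i, Bs M i ≤ (c + a - b) + As M i := by
        intro i
        have := hc (i + 1)
        simp only [As_cons, Bs_cons] at this
        omega
      have hIH := ih hM (c + a - b) hcM (t - (a + b))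
      rw [bw, take_count_true_z, take_count_false_z]
      omega

lemma getLast?_append_right {l l2 : List Bool} (h : l2 ≠ []) :
    (l ++ l2).getLast? = l2.getLast? := by
  rw [List.getLast?_append]
  obtain ⟨a, ha⟩ := Option.isSome_iff_exists.1 (List.getLast?_isSome.2 h)
  rw [ha]
  rfl

lemma decomp_aux : ∀ n (w : List Bool), w.length ≤ n → (w ≠ [] → w.head? = some true) →
    (w ≠ [] → w.getLast? = some false) → ∃ L, pos L ∧ bw L = w := by
  intro n
  induction n with
  | zero =>
    intro w hw _ _
    have : w = [] := by
      rcases w with _ | _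
      · rfl
      · simp at hw
    exact ⟨[], by simp [pos], by simp [bw, this]⟩
  | succ n ih =>
    intro w hw hh hl
    by_cases hne : w = []
    · exact ⟨[], by simp [pos], by simp [bw, hne]⟩
    · set u := w.takeWhile (fun x => x) with hu
      set v := w.dropWhile (fun x => x) with hv
      have huv : u ++ v = w := List.takeWhile_append_dropWhile
      have hurep : u = List.replicate u.length true :=
        List.eq_replicate_of_mem (fun x hx => by simpa using List.mem_takeWhile_imp hx)
      have hulen : 1 ≤ u.length := by
        rcases w with _ | ⟨x, w'⟩
        · exact absurd rfl hne
        · have : x = true := by have := hh hne; simpa using this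
          subst this
          rw [hu]
          simp [List.takeWhile]
      have hvne : v ≠ [] := by
        intro hc
        have hwu : w = u := by rw [← huv, hc, List.append_nil]
        have := hl hne
        rw [hwu, hurep] at this
        have hmem := List.getLast?_eq_some_iff.1 this
        obtain ⟨ys, hys⟩ := hmem
        have : false ∈ List.replicate u.length true := by rw [hys]; simp
        simpa using List.eq_of_mem_replicate this
      have hvhead : v.head? = some false := by
        rcases hV : v with _ | ⟨x, v'⟩
        · exact absurd hV hvne
        · have hx := List.head?_dropWhile_not (fun x => x) w
          rw [← hv, hV] at hx
          simp at hx
          simp [hx]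
      set d := v.takeWhile (fun x => !x) with hd
      set e := v.dropWhile (fun x => !x) with he
      have hde : d ++ e = v := List.takeWhile_append_dropWhile
      have hdrep : d = List.replicate d.length false := by
        apply List.eq_replicate_of_mem
        intro x hx
        have := List.mem_takeWhile_imp hx
        simpa using this
      have hdlen : 1 ≤ d.length := by
        rcases hV : v with _ | ⟨x, v'⟩
        · exact absurd hV hvne
        · have : x = false := by rw [hV] at hvhead; simpa using hvhead
          subst this
          rw [hd, hV]
          simp [List.takeWhile]
      have hehead : e ≠ [] → e.head? = some true := by
        intro hene
        rcases hE : e with _ | ⟨x, e'⟩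
        · exact absurd hE hene
        · have hx := List.head?_dropWhile_not (fun x => !x) v
          rw [← he, hE] at hx
          simp at hx
          simp [hx]
      have helast : e ≠ [] → e.getLast? = some false := by
        intro hene
        have h1 : w.getLast? = e.getLast? := by
          rw [← huv, ← hde, getLast?_append_right (show d ++ e ≠ [] from by simp [hene]),
            getLast?_append_right hene]
        rw [← h1]
        exact hl hne
      have helen : e.length ≤ n := by
        have h1 : w.length = u.length + d.length + e.length := by
          rw [← huv, ← hde]
          simp [List.length_append]
          omega
        omega
      obtain ⟨L, hLpos, hLbw⟩ := ih e helen hehead helast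
      refine ⟨(u.length, d.length) :: L, ?_, ?_⟩
      · intro q hq
        rcases List.mem_cons.1 hq with rfl | hq2
        · exact ⟨hulen, hdlen⟩
        · exact hLpos q hq2
      · rw [bw, hLbw, ← hurep, ← hdrep, List.append_assoc, hde, huv]

lemma count_true_add_false (w : List Bool) : w.count true + w.count false = w.length := by
  have := List.length_eq_countP_add_countP (· == true) (l := w)
  simpa [List.count] using this.symm

lemma dyck_head (n : ℕ) (w : List Bool) (h : IsDyckWord n w) (hne : w ≠ []) :
    w.head? = some true := by
  rcases w with _ | ⟨x, w'⟩
  · exact absurd rfl hne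
  · have h1 := h.2.2 1
    rcases x with _ | _
    · simp at h1
    · rfl

lemma dyck_last (n : ℕ) (w : List Bool) (h : IsDyckWord n w) (hne : w ≠ []) :
    w.getLast? = some false := by
  have hcnt := count_true_add_false w
  have hlen := h.1
  have htru := h.2.1
  have hx : w.getLast? = some (w.getLast hne) := List.getLast?_eq_getLast hne
  rcases hxv : w.getLast hne with _ | _
  · rw [hx, hxv]
  · exfalso
    have hw : w.dropLast ++ [w.getLast hne] = w := List.dropLast_append_getLast hne
    have h1 := h.2.2 (w.length - 1)
    have htake : w.take (w.length - 1) = w.dropLast := List.dropLast_eq_take.symm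
    rw [htake] at h1
    have hct : w.count true = w.dropLast.count true + 1 := by
      conv_lhs => rw [← hw]
      rw [List.count_append, hxv]
      simp
    have hcf : w.count false = w.dropLast.count false := by
      conv_lhs => rw [← hw]
      rw [List.count_append, hxv]
      simp
    have hn1 : 1 ≤ n := by
      rcases Nat.eq_zero_or_pos n with rfl | h'
      · rw [List.length_eq_zero_iff.1 (by omega : w.length = 0)] at hne
        exact absurd rfl hne
      · exact h'
    omega

lemma dyck_decomp (m k : ℕ) (hk : 1 ≤ k) (w : List Bool) (hd : IsDyckWord (m + 1) w)
    (hnv : numValleys w = k) :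
    ∃ L, pos L ∧ bw L = w ∧ L.length = k + 1 ∧ As L (k + 1) = m + 1 ∧
      Bs L (k + 1) = m + 1 ∧
      (∀ i, 1 ≤ i → i ≤ k → upCount w i = As L i - i ∧ downCount w i = Bs L i - i) ∧
      (∀ i, Bs L i ≤ As L i) := by
  have hne : w ≠ [] := by
    intro hc
    have := hd.1
    rw [hc] at this
    simp at this
  obtain ⟨L, hLpos, hLbw⟩ := decomp_aux w.length w le_rfl
    (fun _ => dyck_head _ w hd hne) (fun _ => dyck_last _ w hd hne)
  have hLne : L ≠ [] := by
    intro hc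
    rw [hc, bw] at hLbw
    exact hne hLbw.symm
  have hLlen : L.length = k + 1 := by
    have := bw_numValleys L hLpos
    rw [hLbw, hnv] at this
    have := List.length_pos_iff.2 hLne
    omega
  have hAk : As L (k + 1) = m + 1 := by
    rw [← hLlen, ← bw_count_true L, hLbw, hd.2.1]
  have hBk : Bs L (k + 1) = m + 1 := by
    have h1 := count_true_add_false w
    have h2 : w.count false = m + 1 := by
      have := hd.1
      have := hd.2.1
      omega
    rw [← hLlen, ← bw_count_false L, hLbw, h2]
  have hBA : ∀ i, Bs L i ≤ As L i := by
    intro i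
    by_cases hik : i ≤ k + 1
    · have hbd := bw_take_boundary L i
      have h1 := hd.2.2 (As L i + Bs L i)
      rw [← hLbw] at h1
      rw [hbd.1, hbd.2] at h1
      exact h1
    · rw [As_ge L i (by omega), Bs_ge L i (by omega), hLlen, hAk, hBk]
  refine ⟨L, hLpos, hLbw, hLlen, hAk, hBk, ?_, hBA⟩
  intro i h1 h2
  have := bw_counts L hLpos i h1 (by omega)
  rw [hLbw] at this
  exact this

end Dyck11

open Dyck11 in
/-- a Dyck word of length 2m+2 with exactly k valleys is uniquely determined
by the sequences (up_i, down_i), and this map is a bijection onto pairs of weakly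
increasing nonnegative sequences with a_i ≥ b_i and a_k ≤ m - k. -/
theorem dyck_up_down_bijection (m k : ℕ) (hk : 1 ≤ k) (hkm : k ≤ m) :
    Set.BijOn
      (fun w : List Bool =>
        ((fun i : Fin k => upCount w (i.val + 1)),
         (fun i : Fin k => downCount w (i.val + 1))))
      {w : List Bool | IsDyckWord (m + 1) w ∧ numValleys w = k}
      {p : (Fin k → ℕ) × (Fin k → ℕ) |
        Monotone p.1 ∧ Monotone p.2 ∧ (∀ i, p.2 i ≤ p.1 i) ∧ (∀ i, p.1 i ≤ m - k)} := by
  refine ⟨?_, ?_, ?_⟩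
  · -- MapsTo
    intro w hw
    obtain ⟨hd, hnv⟩ := hw
    obtain ⟨L, hLpos, hLbw, hLlen, hAk, hBk, hcnt, hBA⟩ := dyck_decomp m k hk w hd hnv
    refine ⟨?_, ?_, ?_, ?_⟩
    · intro i j hij
      have hij' : i.val ≤ j.val := hij
      simp only
      rw [(hcnt (i.val + 1) (by omega) (by omega)).1, (hcnt (j.val + 1) (by omega) (by omega)).1]
      have hg := As_gap L hLpos (j.val + 1) (i.val + 1) (by omega) (by omega)
      have hp := As_pos L hLpos (i.val + 1) (by omega)
      omega
    · intro i j hij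
      have hij' : i.val ≤ j.val := hij
      simp only
      rw [(hcnt (i.val + 1) (by omega) (by omega)).2, (hcnt (j.val + 1) (by omega) (by omega)).2]
      have hg := Bs_gap L hLpos (j.val + 1) (i.val + 1) (by omega) (by omega)
      have hp := Bs_pos L hLpos (i.val + 1) (by omega)
      omega
    · intro i
      simp only
      rw [(hcnt (i.val + 1) (by omega) (by omega)).1, (hcnt (i.val + 1) (by omega) (by omega)).2]
      have h1 := hBA (i.val + 1)
      have hp := Bs_pos L hLpos (i.val + 1) (by omega)
      omega
    · intro i
      simp only
      rw [(hcnt (i.val + 1) (by omega) (by omega)).1]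
      have hg := As_gap L hLpos (k + 1) (i.val + 1) (by omega) (by omega)
      have hp := As_pos L hLpos (i.val + 1) (by omega)
      omega
  · -- InjOn
    intro w1 hw1 w2 hw2 heq
    obtain ⟨hd1, hnv1⟩ := hw1
    obtain ⟨hd2, hnv2⟩ := hw2
    obtain ⟨L1, h1pos, h1bw, h1len, h1A, h1B, h1cnt, h1BA⟩ := dyck_decomp m k hk w1 hd1 hnv1
    obtain ⟨L2, h2pos, h2bw, h2len, h2A, h2B, h2cnt, h2BA⟩ := dyck_decomp m k hk w2 hd2 hnv2
    have hup : ∀ i : Fin k, upCount w1 (i.val + 1) = upCount w2 (i.val + 1) :=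
      fun i => congrFun (congrArg Prod.fst heq) i
    have hdn : ∀ i : Fin k, downCount w1 (i.val + 1) = downCount w2 (i.val + 1) :=
      fun i => congrFun (congrArg Prod.snd heq) i
    have hAeq : ∀ i, i ≤ k + 1 → As L1 i = As L2 i := by
      intro i hi
      rcases Nat.eq_zero_or_pos i with rfl | hpos
      · simp
      rcases Nat.eq_or_lt_of_le hi with h' | hlt
      · rw [h', h1A, h2A]
      · have e1 := (h1cnt i (by omega) (by omega)).1
        have e2 := (h2cnt i (by omega) (by omega)).1
        have hup' := hup ⟨i - 1, by omega⟩
        simp only at hup'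
        rw [show i - 1 + 1 = i from by omega] at hup'
        have p1 := As_pos L1 h1pos i (by omega)
        have p2 := As_pos L2 h2pos i (by omega)
        omega
    have hBeq : ∀ i, i ≤ k + 1 → Bs L1 i = Bs L2 i := by
      intro i hi
      rcases Nat.eq_zero_or_pos i with rfl | hpos
      · simp
      rcases Nat.eq_or_lt_of_le hi with h' | hlt
      · rw [h', h1B, h2B]
      · have e1 := (h1cnt i (by omega) (by omega)).2
        have e2 := (h2cnt i (by omega) (by omega)).2
        have hdn' := hdn ⟨i - 1, by omega⟩
        simp only at hdn'
        rw [show i - 1 + 1 = i from by omega] at hdn'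
        have p1 := Bs_pos L1 h1pos i (by omega)
        have p2 := Bs_pos L2 h2pos i (by omega)
        omega
    have hLeq : L1 = L2 := by
      apply List.ext_getElem (by rw [h1len, h2len])
      intro i hi1 hi2
      rw [h1len] at hi1
      have g11 := As_succ_of_lt L1 i (by omega)
      have g12 := Bs_succ_of_lt L1 i (by omega)
      have g21 := As_succ_of_lt L2 i (by omega)
      have g22 := Bs_succ_of_lt L2 i (by omega)
      simp only [List.get_eq_getElem] at g11 g12 g21 g22
      have e1 := hAeq i (by omega)
      have e2 := hAeq (i + 1) (by omega)
      have f1 := hBeq i (by omega)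
      have f2 := hBeq (i + 1) (by omega)
      have : (L1[i]).1 = (L2[i]).1 := by omega
      have : (L1[i]).2 = (L2[i]).2 := by omega
      exact Prod.ext ‹(L1[i]).1 = (L2[i]).1› ‹(L1[i]).2 = (L2[i]).2›
    rw [← h1bw, ← h2bw, hLeq]
  · -- SurjOn
    intro p hp
    obtain ⟨p1, p2⟩ := p
    obtain ⟨hmono1, hmono2, hba, hbd⟩ := hp
    simp only at hmono1 hmono2 hba hbd
    set A : ℕ → ℕ := fun i => if hi : 1 ≤ i ∧ i ≤ k then p1 ⟨i - 1, by omega⟩ + i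
      else if i = 0 then 0 else m + 1 with hA
    set B : ℕ → ℕ := fun i => if hi : 1 ≤ i ∧ i ≤ k then p2 ⟨i - 1, by omega⟩ + i
      else if i = 0 then 0 else m + 1 with hB
    set L : List (ℕ × ℕ) :=
      (List.range (k + 1)).map (fun i => (A (i + 1) - A i, B (i + 1) - B i)) with hL
    have hA0 : A 0 = 0 := by simp [hA]
    have hB0 : B 0 = 0 := by simp [hB]
    have hAtop : A (k + 1) = m + 1 := by
      rw [hA]
      simp only
      rw [dif_neg (by omega), if_neg (by omega)]
    have hBtop : B (k + 1) = m + 1 := by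
      rw [hB]
      simp only
      rw [dif_neg (by omega), if_neg (by omega)]
    have hAmid : ∀ i (h1 : 1 ≤ i) (h2 : i ≤ k), A i = p1 ⟨i - 1, by omega⟩ + i := by
      intro i h1 h2
      rw [hA]
      simp only
      rw [dif_pos ⟨h1, h2⟩]
    have hBmid : ∀ i (h1 : 1 ≤ i) (h2 : i ≤ k), B i = p2 ⟨i - 1, by omega⟩ + i := by
      intro i h1 h2
      rw [hB]
      simp only
      rw [dif_pos ⟨h1, h2⟩]
    have hAstep : ∀ i, i ≤ k → A i + 1 ≤ A (i + 1) := by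
      intro i hi
      rcases Nat.eq_zero_or_pos i with rfl | hpos
      · rw [hA0, hAmid 1 (by omega) hk]
        omega
      rcases Nat.eq_or_lt_of_le hi with rfl | hlt
      · rw [hAtop, hAmid i (by omega) le_rfl]
        have := hbd ⟨i - 1, by omega⟩
        omega
      · rw [hAmid i (by omega) (by omega), hAmid (i + 1) (by omega) (by omega)]
        have := hmono1 (show (⟨i - 1, by omega⟩ : Fin k) ≤ ⟨i + 1 - 1, by omega⟩ from
          Fin.mk_le_mk.2 (by omega))
        omega
    have hBstep : ∀ i, i ≤ k → B i + 1 ≤ B (i + 1) := by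
      intro i hi
      rcases Nat.eq_zero_or_pos i with rfl | hpos
      · rw [hB0, hBmid 1 (by omega) hk]
        omega
      rcases Nat.eq_or_lt_of_le hi with rfl | hlt
      · rw [hBtop, hBmid i (by omega) le_rfl]
        have h1 := hbd ⟨i - 1, by omega⟩
        have h2 := hba ⟨i - 1, by omega⟩
        omega
      · rw [hBmid i (by omega) (by omega), hBmid (i + 1) (by omega) (by omega)]
        have := hmono2 (show (⟨i - 1, by omega⟩ : Fin k) ≤ ⟨i + 1 - 1, by omega⟩ from
          Fin.mk_le_mk.2 (by omega))
        omega
    have hBAe : ∀ i, B i ≤ A i := by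
      intro i
      rcases Nat.eq_zero_or_pos i with rfl | hpos
      · rw [hA0, hB0]
      by_cases hik : i ≤ k
      · rw [hAmid i hpos hik, hBmid i hpos hik]
        have := hba ⟨i - 1, by omega⟩
        omega
      · rw [hA, hB]
        simp only
        rw [dif_neg (by omega), dif_neg (by omega), if_neg (by omega)]
    have hLlen : L.length = k + 1 := by simp [hL]
    have hLpos : pos L := by
      intro q hq
      rw [hL, List.mem_map] at hq
      obtain ⟨i, hi, rfl⟩ := hq
      rw [List.mem_range] at hi
      have h1 := hAstep i (by omega)
      have h2 := hBstep i (by omega)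
      constructor
      · simp only
        omega
      · simp only
        omega
    have hgetL0 : ∀ (j : ℕ), j < k + 1 → L[j]? = some (A (j + 1) - A j, B (j + 1) - B j) := by
      intro j hj
      rw [hL]
      simp [List.getElem?_map, List.getElem?_range, hj]
    have hgetL : ∀ (j : ℕ) (hj : j < L.length),
        L.get ⟨j, hj⟩ = (A (j + 1) - A j, B (j + 1) - B j) := by
      intro j hj
      have hg := hgetL0 j (by omega)
      rw [List.getElem?_eq_getElem hj] at hg
      rw [List.get_eq_getElem]
      exact Option.some.inj hg
    have hAs : ∀ i, i ≤ k + 1 → As L i = A i := by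
      intro i
      induction i with
      | zero => intro _; rw [As_zero, hA0]
      | succ j ihj =>
        intro hi
        have hj := ihj (by omega)
        have hstep := hAstep j (by omega)
        have hlt : j < L.length := by omega
        rw [As_succ_of_lt L j hlt, hj, hgetL j hlt]
        simp only
        omega
    have hBs : ∀ i, i ≤ k + 1 → Bs L i = B i := by
      intro i
      induction i with
      | zero => intro _; rw [Bs_zero, hB0]
      | succ j ihj =>
        intro hi
        have hj := ihj (by omega)
        have hstep := hBstep j (by omega)
        have hlt : j < L.length := by omega
        rw [Bs_succ_of_lt L j hlt, hj, hgetL j hlt]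
        simp only
        omega
    have hdyck : IsDyckWord (m + 1) (bw L) := by
      refine ⟨?_, ?_, ?_⟩
      · rw [bw_length L, hLlen, hAs (k + 1) le_rfl, hBs (k + 1) le_rfl, hAtop, hBtop]
        omega
      · rw [bw_count_true L, hLlen, hAs (k + 1) le_rfl, hAtop]
      · have := bw_pref L hLpos 0 ?_
        · intro t
          simpa using this t
        · intro i
          by_cases hik : i ≤ k + 1
          · rw [hAs i hik, hBs i hik]
            simpa using hBAe i
          · rw [As_ge L i (by omega), Bs_ge L i (by omega), hLlen,
              hAs (k + 1) le_rfl, hBs (k + 1) le_rfl, hAtop, hBtop]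
            simp
    refine ⟨bw L, ⟨hdyck, ?_⟩, ?_⟩
    · rw [bw_numValleys L hLpos, hLlen]
      omega
    · have hcnt := bw_counts L hLpos
      simp only [Prod.mk.injEq]
      constructor
      · funext i
        rw [(hcnt (i.val + 1) (by omega) (by omega)).1, hAs (i.val + 1) (by omega),
          hAmid (i.val + 1) (by omega) (by omega)]
        simp
      · funext i
        rw [(hcnt (i.val + 1) (by omega) (by omega)).2, hBs (i.val + 1) (by omega),
          hBmid (i.val + 1) (by omega) (by omega)]
        simp
end

section
/- For nonnegative integers a and b, the number of a × b matrices with entries in {0,1} that are weakly decreasing along each row and each column equals C(a+b, a). -/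
open scoped BigOperators

section Aux

/-- Sum of the indicator of an initial segment. -/
lemma aux_sum_indicator (b k : ℕ) (hk : k ≤ b) :
    (∑ j : Fin b, if (j : ℕ) < k then 1 else 0) = k := by
  rw [Fin.sum_univ_eq_sum_range (fun j => if j < k then 1 else 0)]
  rw [Finset.sum_ite, Finset.sum_const, Finset.sum_const]
  have : Finset.filter (fun x => x < k) (Finset.range b) = Finset.range k := by
    ext x; simp; omega
  simp [this]

/-- An antitone 0/1 sequence is determined by its sum. -/
lemma aux_row_eq {b : ℕ} (f : Fin b → ℕ) (h1 : ∀ j, f j ≤ 1)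
    (hmono : ∀ j j' : Fin b, j ≤ j' → f j' ≤ f j) (j : Fin b) :
    f j = if (j : ℕ) < ∑ j', f j' then 1 else 0 := by
  classical
  set S := Finset.univ.filter (fun j' => f j' = 1) with hS
  have hsum : ∑ j', f j' = S.card := by
    rw [Finset.card_filter]
    apply Finset.sum_congr rfl
    intro x _
    have := h1 x
    interval_cases h : f x <;> simp [h]
  rcases Nat.le_one_iff_eq_zero_or_eq_one.mp (h1 j) with hj | hj
  · have hsub : S ⊆ Finset.Iio j := by
      intro x hx
      simp only [hS, Finset.mem_filter] at hx
      simp only [Finset.mem_Iio]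
      by_contra hc
      have : f x ≤ f j := hmono j x (not_lt.mp hc)
      omega
    have := Finset.card_le_card hsub
    rw [Fin.card_Iio] at this
    rw [hj, hsum]
    rw [if_neg (by omega)]
  · have hsub : Finset.Iic j ⊆ S := by
      intro x hx
      simp only [Finset.mem_Iic] at hx
      simp only [hS, Finset.mem_filter]
      have := hmono x j hx
      have := h1 x
      constructor
      · exact Finset.mem_univ x
      · omega
    have := Finset.card_le_card hsub
    rw [Fin.card_Iic] at this
    rw [hj, hsum]
    rw [if_pos (by omega)]

/-- strict monotone maps between Fin's increase differences. -/
lemma aux_sm_diff {n m : ℕ} {h : Fin n → Fin m} (hm : StrictMono h) {i j : Fin n}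
    (hij : i ≤ j) : (h i : ℕ) + (j : ℕ) ≤ (h j : ℕ) + (i : ℕ) := by
  have key : ∀ d (k : ℕ) (hkd : k + d < n),
      (h ⟨k, by omega⟩ : ℕ) + d ≤ h ⟨k + d, hkd⟩ := by
    intro d
    induction d with
    | zero => intro k hkd; simp
    | succ d ih =>
      intro k hkd
      have h1 := ih k (by omega)
      have h2 : h ⟨k + d, by omega⟩ < h ⟨k + d + 1, by omega⟩ := by
        apply hm
        simp [Fin.lt_def]
      rw [Fin.lt_def] at h2
      have : (⟨k + (d+1), hkd⟩ : Fin n) = ⟨k + d + 1, by omega⟩ := by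
        apply Fin.ext; simp; omega
      rw [this]
      omega
  have hij' : (i : ℕ) ≤ (j : ℕ) := hij
  have := key ((j : ℕ) - (i : ℕ)) (i : ℕ) (by omega)
  have hj : (⟨(i : ℕ) + ((j : ℕ) - (i : ℕ)), by omega⟩ : Fin n) = j := by
    apply Fin.ext; simp; omega
  rw [hj] at this
  have hi : (⟨(i : ℕ), by omega⟩ : Fin n) = i := rfl
  rw [hi] at this
  omega

lemma aux_le_apply {n m : ℕ} {h : Fin n → Fin m} (hm : StrictMono h) (i : Fin n) :
    (i : ℕ) ≤ h i := by
  have h0 : (⟨0, i.pos⟩ : Fin n) ≤ i := by simp [Fin.le_def]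
  have := aux_sm_diff hm h0
  simp at this
  omega

lemma aux_upper {n m : ℕ} {h : Fin n → Fin m} (hm : StrictMono h) (i : Fin n) :
    (h i : ℕ) ≤ (m - n) + i := by
  have hn : 0 < n := i.pos
  have hlast : i ≤ (⟨n - 1, by have := i.pos; omega⟩ : Fin n) := by
    simp [Fin.le_def]; omega
  have h1 := aux_sm_diff hm hlast
  have h2 := (h ⟨n - 1, by have := i.pos; omega⟩).isLt
  have h3 := aux_le_apply hm (⟨n - 1, by have := i.pos; omega⟩ : Fin n)
  simp at h1 h2 h3 ⊢
  omega

end Aux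

section EquivA

/-- Equiv between height-1 plane partitions and antitone functions. -/
noncomputable def equivA (a b : ℕ) :
    {M : Fin a → Fin b → ℕ | IsPlanePartition M 1} ≃
      {r : Fin a → Fin (b + 1) // Antitone r} where
  toFun := fun ⟨M, hM⟩ =>
    ⟨fun i => ⟨∑ j, M i j, by
      have : ∑ j, M i j ≤ ∑ _j : Fin b, 1 :=
        Finset.sum_le_sum (fun j _ => hM.1 i j)
      simp at this; omega⟩, by
      intro i i' hii'
      simp only [Fin.mk_le_mk, Fin.le_def]
      exact Finset.sum_le_sum (fun j _ => hM.2.2 j i i' hii')⟩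
  invFun := fun ⟨r, hr⟩ =>
    ⟨fun i j => if (j : ℕ) < r i then 1 else 0, by
      refine ⟨fun i j => by simp only []; split <;> omega, fun i j j' hjj' => ?_, fun j i i' hii' => ?_⟩
      · have : (j : ℕ) ≤ (j' : ℕ) := hjj'
        simp only []; split_ifs <;> omega
      · have : (r i' : ℕ) ≤ r i := hr hii'
        simp only []; split_ifs <;> omega⟩
  left_inv := by
    rintro ⟨M, hM⟩
    apply Subtype.ext
    funext i j
    simp only
    exact (aux_row_eq (M i) (hM.1 i) (hM.2.1 i) j).symm
  right_inv := by
    rintro ⟨r, hr⟩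
    apply Subtype.ext
    funext i
    apply Fin.ext
    simp only
    exact aux_sum_indicator b (r i) (by have := (r i).isLt; omega)

end EquivA

section EquivB

/-- The strictly monotone function attached to an antitone `r`. -/
def frFun {a b : ℕ} (r : Fin a → Fin (b + 1)) (i : Fin a) : Fin (a + b) :=
  ⟨(r i.rev : ℕ) + (i : ℕ), by have h1 := (r i.rev).isLt; have h2 := i.isLt; omega⟩

lemma frFun_strictMono {a b : ℕ} {r : Fin a → Fin (b + 1)} (hr : Antitone r) :
    StrictMono (frFun r) := by
  intro i j hij
  have h1 : j.rev ≤ i.rev := by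
    simp [Fin.le_def, Fin.rev]; have := hij.le; have : (i:ℕ) ≤ j := hij.le; omega
  have h2 : (r i.rev : ℕ) ≤ r j.rev := hr h1
  have h3 : (i : ℕ) < j := hij
  simp only [frFun, Fin.mk_lt_mk]
  omega

noncomputable def equivB (a b : ℕ) :
    {r : Fin a → Fin (b + 1) // Antitone r} ≃
      {s : Finset (Fin (a + b)) // s.card = a} := by
  apply Equiv.ofBijective
    (fun r => ⟨Finset.univ.image (frFun r.1), by
      rw [Finset.card_image_of_injective _ (frFun_strictMono r.2).injective]
      simp⟩)
  constructor
  · rintro ⟨r, hr⟩ ⟨r', hr'⟩ hEq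
    simp only [Subtype.mk.injEq] at hEq
    have hrange : Set.range (frFun r) = Set.range (frFun r') := by
      rw [← Set.image_univ, ← Set.image_univ, ← Finset.coe_univ,
        ← Finset.coe_image, ← Finset.coe_image, hEq]
    have hfr : frFun r = frFun r' := by
      haveI hwf : WellFoundedLT (Fin a) := inferInstance
      exact (@StrictMono.range_inj (Fin a) (Fin (a+b)) _ _ hwf _ _
        (frFun_strictMono hr) (frFun_strictMono hr')).mp hrange
    apply Subtype.ext
    simp only
    funext i
    have := congrFun hfr i.rev
    simp only [frFun, Fin.mk.injEq, Fin.rev_rev] at this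
    apply Fin.ext
    omega
  · rintro ⟨s, hs⟩
    set h : Fin a ↪o Fin (a + b) := s.orderEmbOfFin hs with hh
    have hm : StrictMono h := h.strictMono
    have hub : ∀ i : Fin a, (h i : ℕ) ≤ b + i := by
      intro i
      have := aux_upper hm i
      omega
    have hlb : ∀ i : Fin a, (i : ℕ) ≤ h i := aux_le_apply hm
    refine ⟨⟨fun i => ⟨(h i.rev : ℕ) - (i.rev : ℕ), by
        have := hub i.rev; have := hlb i.rev; omega⟩, ?_⟩, ?_⟩
    · intro i i' hii'
      have h1 : i'.rev ≤ i.rev := by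
        simp [Fin.le_def, Fin.rev]; have : (i:ℕ) ≤ i' := hii'; omega
      have h2 := aux_sm_diff hm h1
      have h3 := hlb i'.rev
      have h4 := hlb i.rev
      simp only [Fin.mk_le_mk, Fin.le_def]
      omega
    · apply Subtype.ext
      simp only
      have hfr : frFun (fun i => (⟨(h i.rev : ℕ) - (i.rev : ℕ), by
          have := hub i.rev; have := hlb i.rev; omega⟩ : Fin (b+1))) = ⇑h := by
        funext i
        simp only [frFun, Fin.rev_rev]
        apply Fin.ext
        simp only
        have := hlb i
        omega
      rw [hfr]
      apply Finset.coe_injective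
      rw [Finset.coe_image, Finset.coe_univ, Set.image_univ]
      exact s.range_orderEmbOfFin hs

end EquivB

/-- the number of a × b × 1 plane partitions is C(a+b, a). -/
theorem planePartitions_height_one (a b : ℕ) :
    {M : Fin a → Fin b → ℕ | IsPlanePartition M 1}.ncard = Nat.choose (a + b) a := by
  rw [← Nat.card_coe_set_eq]
  rw [Nat.card_congr ((equivA a b).trans (equivB a b))]
  rw [Nat.card_eq_fintype_card, Fintype.card_finset_len, Fintype.card_fin]
end

section
/- For all integers 1 ≤ k ≤ m, the number of k × (m-k) nonnegative integer matrices of width at most 2 equals the number of (m-k) × k nonnegative integer matrices of width at most 2; consequently the Narayana numbers satisfy N(m+1, k+1) = N(m+1, m-k+1). -/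
open scoped BigOperators

lemma widthLE_transpose {a b : ℕ} {M : Fin a → Fin b → ℕ} {c : ℕ}
    (h : widthLE M c) : widthLE (fun j i => M i j) c := by
  intro D h1 h2
  have hinj : Function.Injective (Prod.swap : Fin b × Fin a → Fin a × Fin b) :=
    Prod.swap_injective
  have := h (D.image Prod.swap)
    (by
      intro p hp
      simp only [Finset.mem_image] at hp
      obtain ⟨q, hq, rfl⟩ := hp
      exact h1 q hq)
    (by
      intro p hp q hq
      simp only [Finset.mem_image] at hp hq
      obtain ⟨p', hp', rfl⟩ := hp
      obtain ⟨q', hq', rfl⟩ := hq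
      rcases h2 p' hp' q' hq' with ⟨h3, h4⟩ | ⟨h3, h4⟩
      · exact Or.inl ⟨h4, h3⟩
      · exact Or.inr ⟨h4, h3⟩)
  rwa [Finset.sum_image (fun x _ y _ h => hinj h)] at this

/-- the number of k × (m-k) matrices of width ≤ 2 equals the number of
(m-k) × k matrices of width ≤ 2, and consequently N(m+1, k+1) = N(m+1, m-k+1). -/
theorem width_two_transpose_count_and_narayana (m k : ℕ) (hk : 1 ≤ k) (hkm : k ≤ m) :
    {M : Fin k → Fin (m - k) → ℕ | widthLE M 2}.ncard =
      {M : Fin (m - k) → Fin k → ℕ | widthLE M 2}.ncard ∧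
    (1 / (m + 1 : ℚ)) * (Nat.choose (m + 1) (k + 1)) * (Nat.choose (m + 1) k) =
      (1 / (m + 1 : ℚ)) * (Nat.choose (m + 1) (m - k + 1)) * (Nat.choose (m + 1) (m - k)) := by
  constructor
  · have himg : (fun M : Fin k → Fin (m-k) → ℕ => fun j i => M i j) ''
        {M : Fin k → Fin (m - k) → ℕ | widthLE M 2} =
        {M : Fin (m - k) → Fin k → ℕ | widthLE M 2} := by
      ext N
      constructor
      · rintro ⟨M, hM, rfl⟩
        exact widthLE_transpose hM
      · intro hN
        exact ⟨fun i j => N j i, widthLE_transpose hN, rfl⟩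
    have hinj : Function.Injective
        (fun M : Fin k → Fin (m-k) → ℕ => fun j i => M i j) := by
      intro M M' h
      funext i j
      exact congrFun (congrFun h j) i
    rw [← himg, Set.ncard_image_of_injective _ hinj]
  · have h1 : m - k + 1 = m + 1 - k := by omega
    have h2 : m - k = m + 1 - (k + 1) := by omega
    rw [h1, h2, Nat.choose_symm (by omega), Nat.choose_symm (by omega)]
    ring
end

section
/- For every Dyck word w of length 2m+2 with exactly k valleys, the k × (m-k) matrix B^w defined by B^w_{ij} = 2 if down_{k+1-i}(w) ≥ j, B^w_{ij} = 1 if down_{k+1-i}(w) < j ≤ up_{k+1-i}(w), and B^w_{ij} = 0 if up_{k+1-i}(w) < j, is a plane partition: it has entries in {0,1,2} and is weakly decreasing along rows and columns. -/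
open scoped BigOperators

lemma valley_lt (w : List Bool) : ∀ x ∈ valleyPositions w, x < w.length := by
  intro x hx
  simp only [valleyPositions, List.mem_filter, List.mem_range] at hx
  exact hx.1

lemma valley_sorted (w : List Bool) : (valleyPositions w).Pairwise (· < ·) :=
  List.Pairwise.sublist List.filter_sublist List.pairwise_lt_range

lemma getD_mono (w : List Bool) {a b : ℕ} (h : a ≤ b) :
    (valleyPositions w).getD a w.length ≤ (valleyPositions w).getD b w.length := by
  set l := valleyPositions w with hl
  by_cases hb : b < l.length
  · have ha : a < l.length := lt_of_le_of_lt h hb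
    rw [List.getD_eq_getElem _ _ ha, List.getD_eq_getElem _ _ hb]
    rcases lt_or_eq_of_le h with h' | h'
    · exact le_of_lt (List.pairwise_iff_getElem.mp (valley_sorted w) a b ha hb h')
    · subst h'; exact le_rfl
  · rw [List.getD_eq_default _ _ (le_of_not_gt hb)]
    by_cases ha : a < l.length
    · rw [List.getD_eq_getElem _ _ ha]
      exact le_of_lt (valley_lt w _ (l.getElem_mem ha))
    · rw [List.getD_eq_default _ _ (le_of_not_gt ha)]

lemma count_mono (p : ℕ → Bool) {a b : ℕ} (h : a ≤ b) :
    ((List.range a).filter p).length ≤ ((List.range b).filter p).length :=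
  ((List.range_sublist.mpr h).filter p).length_le

lemma downCount_mono (w : List Bool) {a b : ℕ} (h : a ≤ b) :
    downCount w a ≤ downCount w b :=
  count_mono _ (getD_mono w (Nat.sub_le_sub_right h 1))

lemma upCount_mono (w : List Bool) {a b : ℕ} (h : a ≤ b) :
    upCount w a ≤ upCount w b :=
  count_mono _ (getD_mono w (Nat.sub_le_sub_right h 1))

/-- for every Dyck word w of length 2m+2 with exactly k valleys, the matrix
B^w built from the up/down statistics is a k × (m-k) × 2 plane partition. -/
theorem dyck_matrix_is_planePartition (m k : ℕ) (w : List Bool)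
    (hw : IsDyckWord (m + 1) w) (hv : numValleys w = k) :
    IsPlanePartition
      (fun (i : Fin k) (j : Fin (m - k)) =>
        if j.val + 1 ≤ downCount w (k - i.val) then 2
        else if j.val + 1 ≤ upCount w (k - i.val) then 1
        else 0) 2 := by
  refine ⟨fun i j => ?_, fun i j j' h => ?_, fun j i i' h => ?_⟩
  · dsimp only; split_ifs <;> omega
  · dsimp only
    have hj : (j : ℕ) ≤ (j' : ℕ) := h
    split_ifs <;> omega
  · dsimp only
    have h1 : downCount w (k - i'.val) ≤ downCount w (k - i.val) :=
      downCount_mono w (Nat.sub_le_sub_left h k)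
    have h2 : upCount w (k - i'.val) ≤ upCount w (k - i.val) :=
      upCount_mono w (Nat.sub_le_sub_left h k)
    split_ifs <;> omega
end
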